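/- arXiv:hep-lat/9604010 — 2 statements merged into one kernel-verified Lean document; each statement's English description precedes it below -/
import Mathlib

section
/- Let M be a complex-valued function on finite subsets of Z^d with M({x}) = 0 for all singletons, and suppose there exist α > 0 such that for every site y, Σ_{P : y ∈ P, |P| ≥ 2} |M(P)|·exp(α|P|) ≤ α/2. Then for every finite admissible collection P = {P₁,…,P_k} of pairwise disjoint finite sets, Σ_{P' ∈ Conn(P), P' ≠ ∅} exp(α‖P'‖)·|M|^{P'} ≤ (1/2)·exp(α‖P‖), where Conn(P) is the set of admissible collections P' = {P'₁,…,P'ₙ} of pairwise disjoint sets each of which intersects ∪ᵢPᵢ, ‖P‖ := Σᵢ |Pᵢ|, and |M|^{P'} := ∏ⱼ |M(P'ⱼ)|. -/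
/-!
Pick in every polymer `Q` of a collection `𝒫' ∈ Conn(𝒫)` a representative site in
`Q ∩ Λ`, where `Λ = ⋃ 𝒫`. Disjointness makes the representatives distinct, so `𝒫'` is
encoded injectively by the map sending each site of `Λ` to the polymer it represents
(or to nothing). Summing over all such maps factorises over the sites, and each site
contributes at most `1 + α/2` because `M` vanishes on singletons. Hence
`1 + Σ ≤ (1 + α/2)^|Λ| ≤ e^{α|Λ|/2} ≤ 1 + e^{α|Λ|}/2`, using `t ≤ 1 + t²/2`, and
`|Λ| ≤ ‖𝒫‖`.
-/

/-- An admissible collection: a finite set of pairwise disjoint nonempty finite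
subsets of the lattice. -/
def Admissible {α : Type*} (C : Finset (Finset α)) : Prop :=
  (∀ Q ∈ C, Q.Nonempty) ∧ ∀ Q ∈ C, ∀ R ∈ C, Q ≠ R → Disjoint Q R

open scoped ENNReal

namespace ENNReal

lemma tsum_option {β : Type*} (g : Option β → ℝ≥0∞) :
    ∑' o, g o = g none + ∑' b, g (some b) := by
  rw [← (Equiv.optionEquivSumPUnit.{0} β).symm.tsum_eq,
    ENNReal.summable.tsum_sum ENNReal.summable, add_comm]
  simp

lemma prod_tsum {ι β : Type*} [Fintype ι] (g : ι → β → ℝ≥0∞) :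
    ∏ i, ∑' b, g i b = ∑' f : ι → β, ∏ i, g i (f i) := by
  revert g
  refine Fintype.induction_empty_option (P := fun ι _ => ∀ g : ι → β → ℝ≥0∞,
    ∏ i, ∑' b, g i b = ∑' f : ι → β, ∏ i, g i (f i)) ?_ ?_ ?_ ι
  · intro ι κ _ e ih g
    let : Fintype ι := .ofEquiv κ e.symm
    rw [← (Equiv.piCongrLeft' (fun _ => β) e).tsum_eq, ← e.prod_comp, ih]
    refine tsum_congr fun f => ?_
    rw [← e.prod_comp]
    simp
  · simp
  · intro ι _ ih g
    rw [← (Equiv.piOptionEquivProd (β := fun _ => β)).symm.tsum_eq, ENNReal.tsum_prod',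
      Fintype.prod_option, ih, ← ENNReal.tsum_mul_right]
    refine tsum_congr fun b => ?_
    rw [← ENNReal.tsum_mul_left]
    simp [Fintype.prod_option]

end ENNReal

noncomputable section

namespace Polymer

variable {V : Type*} [DecidableEq V]

/-- The weight of a site `y` occupied by the polymer `Q`; `Q = ∅` encodes an empty site. -/
def siteWeight (w : Finset V → ℝ≥0∞) (y : V) (Q : Finset V) : ℝ≥0∞ :=
  if Q = ∅ then 1 else if y ∈ Q then w Q else 0

lemma tsum_siteWeight (w : Finset V → ℝ≥0∞) (y : V) :
    ∑' Q, siteWeight w y Q = 1 + ∑' Q : {Q : Finset V // y ∈ Q}, w Q := by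
  rw [ENNReal.tsum_eq_add_tsum_ite ∅,
    show ∑' Q : {Q : Finset V // y ∈ Q}, w Q = _ from tsum_subtype {Q | y ∈ Q} w]
  congr 1
  refine tsum_congr fun Q => ?_
  by_cases hQ : Q = ∅ <;> simp [siteWeight, Set.indicator_apply, hQ]

def Conn (Λ : Finset V) : Set (Finset (Finset V)) :=
  {C | Admissible C ∧ ∀ Q ∈ C, ¬ Disjoint Q Λ}

variable [Nonempty V]

def rep (Λ Q : Finset V) : V := Classical.epsilon (· ∈ Q ∩ Λ)

lemma rep_mem {Λ Q : Finset V} (h : ¬ Disjoint Q Λ) : rep Λ Q ∈ Q ∩ Λ :=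
  Classical.epsilon_spec (Finset.not_disjoint_iff_nonempty_inter.mp h)

/-- The union of the polymers of `C` represented by `y`: a single polymer or `∅`. -/
def gather (Λ : Finset V) (C : Finset (Finset V)) (y : V) : Finset V :=
  (C.filter (rep Λ · = y)).sup id

variable {Λ : Finset V} {C : Finset (Finset V)}

lemma gather_rep (hC : C ∈ Conn Λ) {Q : Finset V} (hQ : Q ∈ C) :
    gather Λ C (rep Λ Q) = Q := by
  obtain ⟨hCa, hCΛ⟩ := hC
  suffices C.filter (rep Λ · = rep Λ Q) = {Q} by simp [gather, this]
  refine Finset.eq_singleton_iff_unique_mem.mpr ⟨Finset.mem_filter.mpr ⟨hQ, rfl⟩, ?_⟩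
  intro R hR
  obtain ⟨hRC, hRQ⟩ := Finset.mem_filter.mp hR
  by_contra hne
  have hrepR := (Finset.mem_inter.mp (rep_mem (hCΛ R hRC))).1
  have hrepQ := (Finset.mem_inter.mp (rep_mem (hCΛ Q hQ))).1
  exact Finset.disjoint_left.mp (hCa.2 R hRC Q hQ hne) hrepR (hRQ ▸ hrepQ)

lemma gather_eq_empty {y : V} (hy : y ∉ C.image (rep Λ)) : gather Λ C y = ∅ := by
  have : C.filter (rep Λ · = y) = ∅ :=
    Finset.filter_false_of_mem fun Q hQ h => hy (Finset.mem_image.mpr ⟨Q, hQ, h⟩)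
  simp [gather, this]

lemma gather_injOn : (Conn Λ).InjOn fun C (y : Λ) => gather Λ C y := by
  suffices ∀ A ∈ Conn Λ, ∀ B ∈ Conn Λ, (∀ y ∈ Λ, gather Λ A y = gather Λ B y) → A ⊆ B from
    fun A hA B hB h => (this A hA B hB fun y hy => congrFun h ⟨y, hy⟩).antisymm
      (this B hB A hA fun y hy => (congrFun h ⟨y, hy⟩).symm)
  intro A hA B hB h Q hQ
  have hQB : gather Λ B (rep Λ Q) = Q := by
    rw [← h _ (Finset.mem_inter.mp (rep_mem (hA.2 Q hQ))).2, gather_rep hA hQ]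
  by_cases hy : rep Λ Q ∈ B.image (rep Λ)
  · obtain ⟨R, hR, hRQ⟩ := Finset.mem_image.mp hy
    rw [← hRQ, gather_rep hB hR] at hQB
    exact hQB ▸ hR
  · exact absurd (hQB ▸ gather_eq_empty hy) (hA.1.1 Q hQ).ne_empty

lemma prod_eq_prod_siteWeight_gather (w : Finset V → ℝ≥0∞) (hC : C ∈ Conn Λ) :
    ∏ Q ∈ C, w Q = ∏ y : Λ, siteWeight w y (gather Λ C y) := by
  have hrep : ∀ Q ∈ C, rep Λ Q ∈ Q ∩ Λ := fun Q hQ => rep_mem (hC.2 Q hQ)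
  have himage : C.image (rep Λ) ⊆ Λ := by
    simp only [Finset.image_subset_iff]
    exact fun Q hQ => (Finset.mem_inter.mp (hrep Q hQ)).2
  have hinj : Set.InjOn (rep Λ) C := fun Q hQ R hR h => by
    rw [← gather_rep hC hQ, h, gather_rep hC hR]
  rw [Finset.prod_coe_sort Λ fun y => siteWeight w y (gather Λ C y),
    ← Finset.prod_subset himage fun y _ hy => by simp [siteWeight, gather_eq_empty hy],
    Finset.prod_image hinj]
  refine Finset.prod_congr rfl fun Q hQ => ?_
  simp [siteWeight, gather_rep hC hQ, (hC.1.1 Q hQ).ne_empty,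
    (Finset.mem_inter.mp (hrep Q hQ)).1]

lemma one_add_tsum_prod_le_prod (w : Finset V → ℝ≥0∞) :
    1 + ∑' C : {C : Finset (Finset V) // Admissible C ∧ C.Nonempty ∧ ∀ Q ∈ C, ¬ Disjoint Q Λ},
        ∏ Q ∈ C.1, w Q ≤
      ∏ y ∈ Λ, (1 + ∑' Q : {Q : Finset V // y ∈ Q}, w Q) := by
  set T := {C : Finset (Finset V) // Admissible C ∧ C.Nonempty ∧ ∀ Q ∈ C, ¬ Disjoint Q Λ}
  let coll : Option T → Finset (Finset V) := fun o => o.elim ∅ Subtype.val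
  have hcoll : ∀ o, coll o ∈ Conn Λ := by
    rintro (_ | ⟨C, hC, -, hCΛ⟩)
    · show ∅ ∈ Conn Λ
      simp [Conn, Admissible]
    · exact ⟨hC, hCΛ⟩
  have hcoll_inj : Function.Injective coll := by
    rintro (_ | ⟨A, hA⟩) (_ | ⟨B, hB⟩) h
    · rfl
    · exact absurd h.symm hB.2.1.ne_empty
    · exact absurd h hA.2.1.ne_empty
    · exact congrArg some (Subtype.ext h)
  have hencode_inj : Function.Injective fun o (y : Λ) => gather Λ (coll o) y :=
    fun o o' h => hcoll_inj (gather_injOn (hcoll o) (hcoll o') h)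
  calc 1 + ∑' C : T, ∏ Q ∈ C.1, w Q
      = ∑' o : Option T, ∏ Q ∈ coll o, w Q := by rw [ENNReal.tsum_option]; simp [coll]
    _ = ∑' o : Option T, ∏ y : Λ, siteWeight w y (gather Λ (coll o) y) :=
        tsum_congr fun o => prod_eq_prod_siteWeight_gather w (hcoll o)
    _ ≤ ∑' f : Λ → Finset V, ∏ y : Λ, siteWeight w y (f y) :=
        ENNReal.tsum_comp_le_tsum_of_injective hencode_inj _
    _ = ∏ y ∈ Λ, (1 + ∑' Q : {Q : Finset V // y ∈ Q}, w Q) := by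
        rw [← ENNReal.prod_tsum, ← Finset.prod_coe_sort Λ]
        simp only [tsum_siteWeight]

end Polymer

end

lemma tsum_mem_eq_tsum_two_le_card {V : Type*} {w : Finset V → ℝ≥0∞} (hw : ∀ x, w {x} = 0)
    (y : V) :
    ∑' Q : {Q : Finset V // y ∈ Q}, w Q = ∑' Q : {Q : Finset V // y ∈ Q ∧ 2 ≤ Q.card}, w Q := by
  rw [show ∑' Q : {Q : Finset V // y ∈ Q}, w Q = _ from tsum_subtype {Q | y ∈ Q} w,
    show ∑' Q : {Q : Finset V // y ∈ Q ∧ 2 ≤ Q.card}, w Q = _ from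
      tsum_subtype {Q : Finset V | y ∈ Q ∧ 2 ≤ Q.card} w]
  refine tsum_congr fun Q => ?_
  by_cases hQ : y ∈ Q
  · by_cases hcard : 2 ≤ Q.card
    · simp [hQ, hcard]
    · have : Q = {y} := Finset.eq_singleton_iff_unique_mem.mpr
        ⟨hQ, fun x hx => Finset.card_le_one.mp (by omega) x hx y hQ⟩
      simp [this, hw]
  · simp [hQ]

lemma one_add_half_pow_le_one_add_half_exp {a m : ℝ} (ha : 0 ≤ a) {n : ℕ} (hn : (n : ℝ) ≤ m) :
    (1 + a / 2) ^ n ≤ 1 + Real.exp (a * m) / 2 := by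
  calc (1 + a / 2) ^ n ≤ Real.exp (a / 2) ^ n := by
        gcongr
        linarith [Real.add_one_le_exp (a / 2)]
    _ = Real.exp (a * n / 2) := by rw [← Real.exp_nat_mul]; ring_nf
    _ ≤ Real.exp (a * m / 2) := by gcongr
    _ ≤ 1 + Real.exp (a * m / 2) ^ 2 / 2 := by nlinarith [sq_nonneg (Real.exp (a * m / 2) - 1)]
    _ = 1 + Real.exp (a * m) / 2 := by rw [sq, ← Real.exp_add, add_halves]

lemma ofReal_exp_mul_sum_mul_prod {ι E : Type*} [SeminormedAddGroup E] (s : Finset ι)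
    (f : ι → E) (a : ℝ) (c : ι → ℝ) :
    ENNReal.ofReal (Real.exp (a * ∑ i ∈ s, c i)) * ∏ i ∈ s, ENNReal.ofReal ‖f i‖ =
      ∏ i ∈ s, ENNReal.ofReal (‖f i‖ * Real.exp (a * c i)) := by
  rw [Finset.mul_sum, Real.exp_sum, ENNReal.ofReal_prod_of_nonneg fun _ _ => (Real.exp_pos _).le,
    ← Finset.prod_mul_distrib]
  exact Finset.prod_congr rfl fun i _ => by rw [ENNReal.ofReal_mul (norm_nonneg _), mul_comm]

theorem stmt14_general (d : ℕ) (M : Finset (Fin d → ℤ) → ℂ) (α : ℝ) (hα : 0 < α)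
    (hM1 : ∀ x : Fin d → ℤ, M {x} = 0)
    (hM : ∀ y : Fin d → ℤ,
      ∑' P : {P : Finset (Fin d → ℤ) // y ∈ P ∧ 2 ≤ P.card},
          ENNReal.ofReal (‖M P.1‖ * Real.exp (α * P.1.card)) ≤
        ENNReal.ofReal (α / 2))
    (Pc : Finset (Finset (Fin d → ℤ))) :
    ∑' C' : {C : Finset (Finset (Fin d → ℤ)) //
        Admissible C ∧ C.Nonempty ∧ ∀ Q ∈ C, ¬ Disjoint Q (Pc.sup id)},
        ENNReal.ofReal (Real.exp (α * ∑ Q ∈ C'.1, (Q.card : ℝ))) *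
          ∏ Q ∈ C'.1, ENNReal.ofReal (‖M Q‖) ≤
      (1 / 2) * ENNReal.ofReal (Real.exp (α * ∑ Q ∈ Pc, (Q.card : ℝ))) := by
  set Λ := Pc.sup id
  set m := ∑ Q ∈ Pc, (Q.card : ℝ)
  set v : Finset (Fin d → ℤ) → ℝ≥0∞ := fun Q => ENNReal.ofReal (‖M Q‖ * Real.exp (α * Q.card))
  have hsite (y : Fin d → ℤ) :
      1 + ∑' Q : {Q : Finset (Fin d → ℤ) // y ∈ Q}, v Q ≤ ENNReal.ofReal (1 + α / 2) := by
    rw [tsum_mem_eq_tsum_two_le_card (fun x => by simp [v, hM1]) y,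
      ENNReal.ofReal_add zero_le_one (by positivity), ENNReal.ofReal_one]
    exact add_le_add_right (hM y) 1
  have hcard : (Λ.card : ℝ) ≤ m := by
    simp only [m]
    exact_mod_cast Finset.sup_eq_biUnion Pc id ▸ Finset.card_biUnion_le
  have hbound : 1 + ∑' C : {C // Admissible C ∧ C.Nonempty ∧ ∀ Q ∈ C, ¬ Disjoint Q Λ},
      ∏ Q ∈ C.1, v Q ≤ 1 + 1 / 2 * ENNReal.ofReal (Real.exp (α * m)) :=
    calc _ ≤ _ := Polymer.one_add_tsum_prod_le_prod v
      _ ≤ ENNReal.ofReal (1 + α / 2) ^ Λ.card := Finset.prod_le_pow_card _ _ _ fun y _ => hsite y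
      _ ≤ ENNReal.ofReal (1 + Real.exp (α * m) / 2) := by
          rw [← ENNReal.ofReal_pow (by positivity)]
          exact ENNReal.ofReal_le_ofReal (one_add_half_pow_le_one_add_half_exp hα.le hcard)
      _ = 1 + 1 / 2 * ENNReal.ofReal (Real.exp (α * m)) := by
          rw [ENNReal.ofReal_add zero_le_one (by positivity), ENNReal.ofReal_one,
            ENNReal.ofReal_div_of_pos two_pos, ENNReal.ofReal_ofNat, ENNReal.div_eq_inv_mul,
            one_div]
  simp_rw [ofReal_exp_mul_sum_mul_prod]
  exact (ENNReal.add_le_add_iff_left ENNReal.one_ne_top).mp hbound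

/-- Key estimate for the Mayer–Montroll expansion: if
`Σ_{P ∋ y, |P| ≥ 2} |M(P)| e^{α|P|} ≤ α/2` for every site `y` (and `M` vanishes
on singletons), then for every admissible collection `𝒫`,
`Σ_{∅ ≠ 𝒫' ∈ Conn(𝒫)} e^{α‖𝒫'‖} |M|^{𝒫'} ≤ (1/2) e^{α‖𝒫‖}`. -/
theorem stmt14 (d : ℕ) (M : Finset (Fin d → ℤ) → ℂ) (α : ℝ) (hα : 0 < α)
    (hM1 : ∀ x : Fin d → ℤ, M {x} = 0)
    (hM : ∀ y : Fin d → ℤ,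
      ∑' P : {P : Finset (Fin d → ℤ) // y ∈ P ∧ 2 ≤ P.card},
          ENNReal.ofReal (‖M P.1‖ * Real.exp (α * P.1.card)) ≤
        ENNReal.ofReal (α / 2))
    (Pc : Finset (Finset (Fin d → ℤ))) (hPc : Admissible Pc) :
    ∑' C' : {C : Finset (Finset (Fin d → ℤ)) //
        Admissible C ∧ C.Nonempty ∧ ∀ Q ∈ C, ¬ Disjoint Q (Pc.sup id)},
        ENNReal.ofReal (Real.exp (α * ∑ Q ∈ C'.1, (Q.card : ℝ))) *
          ∏ Q ∈ C'.1, ENNReal.ofReal (‖M Q‖) ≤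
      (1 / 2) * ENNReal.ofReal (Real.exp (α * ∑ Q ∈ Pc, (Q.card : ℝ))) :=
  stmt14_general d M α hα hM1 hM Pc
end

section
/- Fix α > 0 and a function f on finite subsets of Z^d with values in [0,∞). Suppose that for each admissible collection P (finite set of pairwise disjoint nonempty finite subsets of Z^d), Σ_{∅ ≠ P' ∈ Conn(P)} exp(α‖P'‖)·f^{P'} ≤ (1/2)·exp(α‖P‖). Then for every finite set Q and every n ≥ 0, Σ over chains P₁,…,Pₙ with P₁ ∈ Conn({ {x} : x ∈ Q }) and Pᵢ ∈ Conn(P_{i−1}) for i ≥ 2 of ∏ᵢ f^{Pᵢ} is bounded by 2^{−n}·exp(α|Q|), and hence the series Σ_{n≥0} of these sums converges and is bounded by 2·exp(α|Q|). -/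
open scoped ENNReal

/-- `c` is a chain `P₁, …, Pₙ` of nonempty admissible collections with
`P₁ ∈ Conn({{x} : x ∈ Q})` and `Pᵢ ∈ Conn(P_{i−1})` for `i ≥ 2`: every member of
`c i` meets the union of the previous collection (resp. meets `Q` for `i = 0`). -/
def IsChain' {α : Type*} [DecidableEq α] (Q : Finset α) {n : ℕ} (c : Fin n → Finset (Finset α)) : Prop :=
  (∀ i, Admissible (c i) ∧ (c i).Nonempty) ∧
  ∀ i : Fin n, ∀ P ∈ c i,
    ¬ Disjoint P (if h : 0 < (i : ℕ) then
        (c ⟨(i : ℕ) - 1, Nat.lt_of_le_of_lt (Nat.sub_le _ _) i.isLt⟩).sup id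
      else Q)

/-!
Splitting off the first collection `P₁ ∈ Conn(P)` of a chain writes the sum over chains of
length `n + 1` starting from `∪P` as `Σ_{P₁} f^{P₁} · (sum over chains of length n from ∪P₁)`.
By induction the inner sum is at most `2^{-n} e^{α‖P₁‖}`, and the hypothesis then bounds the
whole by `2^{-(n+1)} e^{α‖P‖}`. Start from `P = {{x} : x ∈ Q}`, for which `‖P‖ = |Q|`, and sum
the geometric series.
-/

variable {β : Type*} [DecidableEq β]

/-- The paper's `Conn(P)`, indexed by the union `S = ∪P`. -/
def conn (S : Finset β) : Set (Finset (Finset β)) :=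
  {C | Admissible C ∧ C.Nonempty ∧ ∀ R ∈ C, ¬ Disjoint R S}

lemma isChain'_succ_iff {S : Finset β} {n : ℕ} {c : Fin (n + 1) → Finset (Finset β)} :
    IsChain' S c ↔ c 0 ∈ conn S ∧ IsChain' ((c 0).sup id) (Fin.tail c) := by
  have anchor_succ : ∀ i : Fin n,
      (if _ : 0 < (i.succ : ℕ) then
        (c ⟨(i.succ : ℕ) - 1, Nat.lt_of_le_of_lt (Nat.sub_le _ _) i.succ.isLt⟩).sup id
      else S) = (c i.castSucc).sup id := fun i => by
    rw [dif_pos (show 0 < (i.succ : ℕ) from Nat.succ_pos _)]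
    exact congrArg (fun j => (c j).sup id) (Fin.ext (by simp))
  have anchor_tail : ∀ i : Fin n,
      (if _ : 0 < (i : ℕ) then
        (Fin.tail c ⟨(i : ℕ) - 1, Nat.lt_of_le_of_lt (Nat.sub_le _ _) i.isLt⟩).sup id
      else (c 0).sup id) = (c i.castSucc).sup id := fun i => by
    split_ifs <;> exact congrArg (fun j => (c j).sup id) (Fin.ext (by simp; omega))
  simp only [IsChain', Fin.forall_fin_succ, anchor_succ, anchor_tail]
  simp only [conn, Set.mem_ofPred_eq, Fin.val_zero, lt_self_iff_false, Fin.tail]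
  tauto

def chainSuccEquiv (S : Finset β) (n : ℕ) :
    {c : Fin (n + 1) → Finset (Finset β) // IsChain' S c} ≃
      Σ C : conn S, {c : Fin n → Finset (Finset β) // IsChain' (C.1.sup id) c} where
  toFun c := ⟨⟨c.1 0, (isChain'_succ_iff.1 c.2).1⟩, ⟨Fin.tail c.1, (isChain'_succ_iff.1 c.2).2⟩⟩
  invFun p := ⟨Fin.cons p.1.1 p.2.1, isChain'_succ_iff.2 ⟨p.1.2, p.2.2⟩⟩
  left_inv c := Subtype.ext (Fin.cons_self_tail c.1)
  right_inv _ := rfl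

noncomputable def chainSum (f : Finset β → ℝ≥0∞) (S : Finset β) (n : ℕ) : ℝ≥0∞ :=
  ∑' c : {c : Fin n → Finset (Finset β) // IsChain' S c}, ∏ i, ∏ R ∈ c.1 i, f R

lemma chainSum_zero (f : Finset β → ℝ≥0∞) (S : Finset β) : chainSum f S 0 = 1 := by
  have : Unique {c : Fin 0 → Finset (Finset β) // IsChain' S c} :=
    ⟨⟨⟨finZeroElim, finZeroElim, finZeroElim⟩⟩, fun c => Subtype.ext (funext finZeroElim)⟩
  simp [chainSum]

lemma chainSum_succ (f : Finset β → ℝ≥0∞) (S : Finset β) (n : ℕ) :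
    chainSum f S (n + 1) = ∑' C : conn S, (∏ R ∈ C.1, f R) * chainSum f (C.1.sup id) n := by
  rw [chainSum, ← (chainSuccEquiv S n).symm.tsum_eq, ENNReal.tsum_sigma']
  refine tsum_congr fun C => ?_
  rw [chainSum, ← ENNReal.tsum_mul_left]
  exact tsum_congr fun c => Fin.prod_univ_succ _

theorem chainSum_le_pow_mul {f : Finset β → ℝ≥0∞} {w : Finset (Finset β) → ℝ≥0∞} {r : ℝ≥0∞}
    (hw : ∀ P, Admissible P → 1 ≤ w P)
    (hf : ∀ P, Admissible P → ∑' C : conn (P.sup id), w C * ∏ R ∈ C.1, f R ≤ r * w P) (n : ℕ) :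
    ∀ P, Admissible P → chainSum f (P.sup id) n ≤ r ^ n * w P := by
  induction n with
  | zero => intro P hP; simpa [chainSum_zero] using hw P hP
  | succ n ih =>
    intro P hP
    calc chainSum f (P.sup id) (n + 1)
        = ∑' C : conn (P.sup id), (∏ R ∈ C.1, f R) * chainSum f (C.1.sup id) n := chainSum_succ ..
      _ ≤ ∑' C : conn (P.sup id), (∏ R ∈ C.1, f R) * (r ^ n * w C) :=
          ENNReal.tsum_le_tsum fun C => by gcongr; exact ih C.1 C.2.1
      _ = r ^ n * ∑' C : conn (P.sup id), w C * ∏ R ∈ C.1, f R := by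
          rw [← ENNReal.tsum_mul_left]; exact tsum_congr fun C => by ring
      _ ≤ r ^ n * (r * w P) := by gcongr; exact hf P hP
      _ = r ^ (n + 1) * w P := by ring

lemma admissible_image_singleton (Q : Finset β) : Admissible (Q.image singleton) := by
  refine ⟨by simp, ?_⟩
  simp only [Finset.mem_image]
  rintro _ ⟨x, -, rfl⟩ _ ⟨y, -, rfl⟩ hxy
  exact Finset.disjoint_singleton.2 fun h => hxy (h ▸ rfl)

lemma sup_image_singleton (Q : Finset β) : (Q.image singleton).sup id = Q := by
  rw [Finset.sup_image]; exact Finset.sup_singleton_eq_self Q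

lemma sum_card_image_singleton (Q : Finset β) :
    ∑ R ∈ Q.image singleton, ((R : Finset β).card : ℝ) = Q.card := by
  rw [Finset.sum_image fun _ _ _ _ h => Finset.singleton_injective h]; simp

/-- Iterating the basic cluster-expansion estimate: if for every admissible
collection `P` one has `Σ_{∅ ≠ P' ∈ Conn(P)} e^{α‖P'‖} f^{P'} ≤ (1/2) e^{α‖P‖}`,
then the sum over chains of length `n` of `Πᵢ f^{Pᵢ}` is at most
`2^{−n} e^{α|Q|}`, and the series over `n` is bounded by `2 e^{α|Q|}`. -/
theorem stmt15 (d : ℕ) (α : ℝ) (hα : 0 < α) (f : Finset (Fin d → ℤ) → ℝ≥0∞)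
    (hf : ∀ P : Finset (Finset (Fin d → ℤ)), Admissible P →
      ∑' C : {C : Finset (Finset (Fin d → ℤ)) //
          Admissible C ∧ C.Nonempty ∧ ∀ R ∈ C, ¬ Disjoint R (P.sup id)},
          ENNReal.ofReal (Real.exp (α * ∑ R ∈ C.1, (R.card : ℝ))) *
            ∏ R ∈ C.1, f R ≤
        (1 / 2) * ENNReal.ofReal (Real.exp (α * ∑ R ∈ P, (R.card : ℝ))))
    (Q : Finset (Fin d → ℤ)) :
    (∀ n : ℕ,
      ∑' c : {c : Fin n → Finset (Finset (Fin d → ℤ)) // IsChain' Q c},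
          ∏ i, ∏ R ∈ c.1 i, f R ≤
        ((2 : ℝ≥0∞)⁻¹) ^ n * ENNReal.ofReal (Real.exp (α * Q.card))) ∧
    ∑' n : ℕ, ∑' c : {c : Fin n → Finset (Finset (Fin d → ℤ)) // IsChain' Q c},
        ∏ i, ∏ R ∈ c.1 i, f R ≤
      2 * ENNReal.ofReal (Real.exp (α * Q.card)) := by
  have one_le_weight : ∀ P : Finset (Finset (Fin d → ℤ)), Admissible P →
      1 ≤ ENNReal.ofReal (Real.exp (α * ∑ R ∈ P, (R.card : ℝ))) :=
    fun P _ => ENNReal.one_le_ofReal.2 (Real.one_le_exp (by positivity))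
  have bound : ∀ n, chainSum f Q n ≤ 2⁻¹ ^ n * ENNReal.ofReal (Real.exp (α * Q.card)) := by
    intro n
    have := chainSum_le_pow_mul one_le_weight hf n _ (admissible_image_singleton Q)
    rwa [sup_image_singleton, sum_card_image_singleton, one_div] at this
  refine ⟨bound, ?_⟩
  calc ∑' n, chainSum f Q n
      ≤ ∑' n : ℕ, 2⁻¹ ^ n * ENNReal.ofReal (Real.exp (α * Q.card)) := ENNReal.tsum_le_tsum bound
    _ = 2 * ENNReal.ofReal (Real.exp (α * Q.card)) := by
      rw [ENNReal.tsum_mul_right, ENNReal.tsum_geometric, ENNReal.one_sub_inv_two, inv_inv]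
end
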